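/- For integers $t \ge 1$ and $0 \le u \le t$, one has $\frac{2u+1}{2t} \ge \frac{1}{1+2t} + \frac{2t}{1+2t}\sum_{i=1}^{u}\frac{(-t)_i(-1)^i}{(t+i)(t)_i} \ge \frac{2u+1}{2t} - \frac{4u^3+6u^2+8u+3}{12t^2}$. -/
import Mathlib


/-- The rising factorial (Pochhammer symbol) `(x)_n` for real `x`. -/
noncomputable def asc (x : ℝ) (n : ℕ) : ℝ := (ascPochhammer ℝ n).eval x

lemma asc_zero (x : ℝ) : asc x 0 = 1 := by simp [asc]

lemma asc_succ (x : ℝ) (n : ℕ) : asc x (n + 1) = asc x n * (x + n) := by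
  simp [asc, ascPochhammer_succ_eval]

lemma asc_succ' (x : ℝ) (n : ℕ) : asc x (n + 1) = x * asc (x + 1) n := by
  simp [asc, ascPochhammer_succ_left, Polynomial.eval_comp]

lemma asc_pos (x : ℝ) (hx : 0 < x) (n : ℕ) : 0 < asc x n :=
  ascPochhammer_pos n x hx

/-- Key bounds on `A u := (-t)_u (-1)^u` versus `Q u := (t+1)_u`. -/
lemma key (t u : ℕ) (hu : u ≤ t) :
    0 ≤ asc (-(t : ℝ)) u * (-1) ^ u ∧
    asc (-(t : ℝ)) u * (-1) ^ u ≤ asc ((t : ℝ) + 1) u ∧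
    ((t : ℝ) - u ^ 2) * asc ((t : ℝ) + 1) u ≤ t * (asc (-(t : ℝ)) u * (-1) ^ u) := by
  induction u with
  | zero => simp [asc_zero]
  | succ u ih =>
    have hu' : u ≤ t := Nat.le_of_succ_le hu
    obtain ⟨h1, h2, h3⟩ := ih hu'
    have ht0 : (0 : ℝ) < t := by
      have : 1 ≤ t := le_trans (Nat.succ_le_succ (Nat.zero_le u)) hu
      exact_mod_cast Nat.lt_of_lt_of_le Nat.zero_lt_one this
    have hq : (0 : ℝ) < asc ((t : ℝ) + 1) u := asc_pos _ (by positivity) u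
    have htu : (u : ℝ) ≤ t := by exact_mod_cast hu'
    have htu1 : (u : ℝ) + 1 ≤ t := by exact_mod_cast hu
    have hA : asc (-(t : ℝ)) (u + 1) * (-1) ^ (u + 1)
        = (asc (-(t : ℝ)) u * (-1) ^ u) * ((t : ℝ) - u) := by
      rw [asc_succ]; push_cast; ring
    have hQ : asc ((t : ℝ) + 1) (u + 1) = asc ((t : ℝ) + 1) u * ((t : ℝ) + 1 + u) :=
      asc_succ _ _
    refine ⟨?_, ?_, ?_⟩
    · rw [hA]; push_cast; nlinarith
    · rw [hA, hQ]; push_cast; nlinarith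
    · rw [hA, hQ]; push_cast
      nlinarith [mul_le_mul_of_nonneg_right h3 (sub_nonneg.mpr htu),
        mul_nonneg (show (0 : ℝ) ≤ 2 * (u : ℝ) ^ 3 + 3 * u ^ 2 + 3 * u + 1 by positivity) hq.le]

theorem stmt3 (t u : ℕ) (ht : 1 ≤ t) (hu : u ≤ t) :
    (2 * (u : ℝ) + 1) / (2 * t) ≥
      1 / (1 + 2 * (t : ℝ)) + 2 * (t : ℝ) / (1 + 2 * t) *
        ∑ i ∈ Finset.Icc 1 u,
          asc (-(t : ℝ)) i * (-1) ^ i / (((t : ℝ) + i) * asc (t : ℝ) i) ∧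
    1 / (1 + 2 * (t : ℝ)) + 2 * (t : ℝ) / (1 + 2 * t) *
        ∑ i ∈ Finset.Icc 1 u,
          asc (-(t : ℝ)) i * (-1) ^ i / (((t : ℝ) + i) * asc (t : ℝ) i) ≥
      (2 * (u : ℝ) + 1) / (2 * t) -
        (4 * (u : ℝ) ^ 3 + 6 * u ^ 2 + 8 * u + 3) / (12 * (t : ℝ) ^ 2) := by
  have ht' : (1 : ℝ) ≤ t := by exact_mod_cast ht
  have ht0 : (0 : ℝ) < t := by linarith
  induction u with
  | zero =>
    rw [show Finset.Icc 1 0 = (∅ : Finset ℕ) by simp]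
    simp only [Finset.sum_empty, mul_zero, add_zero, Nat.cast_zero]
    constructor
    · rw [ge_iff_le, div_le_div_iff₀ (by linarith) (by linarith)]
      nlinarith
    · have e : 1 / (1 + 2 * (t : ℝ)) -
          ((2 * (0 : ℝ) + 1) / (2 * t) -
            (4 * (0 : ℝ) ^ 3 + 6 * (0 : ℝ) ^ 2 + 8 * 0 + 3) / (12 * (t : ℝ) ^ 2))
          = 1 / (4 * (t : ℝ) ^ 2 * (1 + 2 * t)) := by
        field_simp
        ring
      have hp : (0 : ℝ) < 1 / (4 * (t : ℝ) ^ 2 * (1 + 2 * t)) := by positivity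
      rw [ge_iff_le, ← sub_nonneg]
      linarith [e ▸ hp]
  | succ u ih =>
    have hu' : u ≤ t := Nat.le_of_succ_le hu
    obtain ⟨ih1, ih2⟩ := ih hu'
    obtain ⟨h1, h2, h3⟩ := key t (u + 1) hu
    have hq : (0 : ℝ) < asc ((t : ℝ) + 1) (u + 1) := asc_pos _ (by positivity) (u + 1)
    have hsum : ∑ i ∈ Finset.Icc 1 (u + 1),
          asc (-(t : ℝ)) i * (-1) ^ i / (((t : ℝ) + i) * asc (t : ℝ) i)
        = (∑ i ∈ Finset.Icc 1 u,
          asc (-(t : ℝ)) i * (-1) ^ i / (((t : ℝ) + i) * asc (t : ℝ) i))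
          + asc (-(t : ℝ)) (u + 1) * (-1) ^ (u + 1) /
              (((t : ℝ) + (u + 1 : ℕ)) * asc (t : ℝ) (u + 1)) := by
      exact Finset.sum_Icc_succ_top (Nat.one_le_iff_ne_zero.mpr (Nat.succ_ne_zero u)) _
    have hD : ((t : ℝ) + ((u : ℕ) + 1 : ℕ)) * asc (t : ℝ) (u + 1)
        = (t : ℝ) * asc ((t : ℝ) + 1) (u + 1) := by
      rw [asc_succ' (t : ℝ) u, asc_succ ((t : ℝ) + 1) u]
      push_cast
      ring
    set S := ∑ i ∈ Finset.Icc 1 u,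
        asc (-(t : ℝ)) i * (-1) ^ i / (((t : ℝ) + i) * asc (t : ℝ) i) with hS
    set A := asc (-(t : ℝ)) (u + 1) * (-1) ^ (u + 1) with hAdef
    set Q := asc ((t : ℝ) + 1) (u + 1) with hQdef
    have hterm : asc (-(t : ℝ)) (u + 1) * (-1) ^ (u + 1) /
          (((t : ℝ) + (u + 1 : ℕ)) * asc (t : ℝ) (u + 1)) = A / ((t : ℝ) * Q) := by
      rw [← hD]
    rw [hsum, hterm]
    have hc : 2 * (t : ℝ) / (1 + 2 * t) * (S + A / ((t : ℝ) * Q))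
        = 2 * (t : ℝ) / (1 + 2 * t) * S + 2 * A / ((1 + 2 * t) * Q) := by
      field_simp
    have hcu : 2 * A / ((1 + 2 * (t : ℝ)) * Q) ≤ 1 / t := by
      rw [div_le_div_iff₀ (by positivity) ht0]
      nlinarith [mul_le_mul_of_nonneg_left h2 (show (0 : ℝ) ≤ 2 * t by positivity),
        mul_pos ht0 hq]
    have hcl : (2 * (t : ℝ) - 2 * ((u : ℝ) + 1) ^ 2 - 1) / (2 * t ^ 2)
        ≤ 2 * A / ((1 + 2 * (t : ℝ)) * Q) := by
      rw [div_le_div_iff₀ (by positivity) (by positivity)]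
      have h3' : ((t : ℝ) - ((u : ℝ) + 1) ^ 2) * Q ≤ (t : ℝ) * A := by
        have := h3
        push_cast at this
        convert this using 2 <;> push_cast <;> ring
      nlinarith [mul_le_mul_of_nonneg_left h3' (show (0 : ℝ) ≤ 4 * (t : ℝ) ^ 2 by positivity),
        mul_nonneg (mul_nonneg ht0.le
          (show (0 : ℝ) ≤ 2 * ((u : ℝ) + 1) ^ 2 + 1 by positivity)) hq.le]
    have e1 : (2 * ((u : ℝ) + 1) + 1) / (2 * t) = (2 * (u : ℝ) + 1) / (2 * t) + 1 / t := by
      field_simp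
      ring
    have e2 : (2 * ((u : ℝ) + 1) + 1) / (2 * t) -
          (4 * ((u : ℝ) + 1) ^ 3 + 6 * ((u : ℝ) + 1) ^ 2 + 8 * ((u : ℝ) + 1) + 3) /
            (12 * (t : ℝ) ^ 2)
        = ((2 * (u : ℝ) + 1) / (2 * t) -
            (4 * (u : ℝ) ^ 3 + 6 * (u : ℝ) ^ 2 + 8 * u + 3) / (12 * (t : ℝ) ^ 2))
          + (2 * (t : ℝ) - 2 * ((u : ℝ) + 1) ^ 2 - 1) / (2 * t ^ 2) := by
      field_simp
      ring
    push_cast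
    rw [hc]
    rw [ge_iff_le] at ih1 ih2
    constructor
    · rw [ge_iff_le, e1]; linarith
    · rw [ge_iff_le, e2]; linarith
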